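/- For every κ > 0, δ > 0 and integer n ≥ 0, the double integral of the Brownian sine covariance over one sampling bin satisfies ∫_{nδ}^{(n+1)δ} ∫_{nδ}^{(n+1)δ} (1/2) ( e^{−κ |s₁ − s₂|} − e^{−κ (s₁ + s₂ + 2 min(s₁,s₂))} ) ds₁ ds₂ = δ/κ + (1/(2κ²)) ( −(1/6) e^{−4κ(n+1)δ} − (1/2) e^{−4κ n δ} + (2/3) e^{−κ(4n+1)δ} + 2 e^{−κδ} − 2 ). -/

import Mathlib

/-!
For `t ≤ s` the kernel is `(e^{-κ(s-t)} - e^{-κ(s+3t)}) / 2`, and it is symmetric in `s, t`.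
Splitting the inner integral at `t = s` therefore leaves exponentials of affine functions on
each piece, so both the inner and the outer integral are evaluated by the fundamental theorem
of calculus with explicit antiderivatives.
-/

open MeasureTheory Real Set

/-- `E[sin(√(2κ) W s) sin(√(2κ) W t)]` for a standard Brownian motion `W`. -/
noncomputable def sineCov (κ s t : ℝ) : ℝ :=
  (1 / 2) * (exp (-κ * |s - t|) - exp (-κ * (s + t + 2 * min s t)))

section

variable {κ s t a b : ℝ}

lemma sineCov_of_le (h : t ≤ s) :
    sineCov κ s t = (1 / 2) * (exp (-κ * (s - t)) - exp (-κ * (s + 3 * t))) := by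
  rw [sineCov, abs_of_nonneg (sub_nonneg.2 h), min_eq_right h]
  ring_nf

lemma sineCov_comm : sineCov κ s t = sineCov κ t s := by
  rw [sineCov, sineCov, abs_sub_comm, min_comm]
  ring_nf

lemma continuous_sineCov : Continuous (sineCov κ s) := by
  unfold sineCov; fun_prop

lemma integral_sineCov_left (hκ : κ ≠ 0) (h : a ≤ s) :
    ∫ t in a..s, sineCov κ s t =
      (1 + exp (-κ * (4 * s)) / 3 - exp (-κ * (s - a)) - exp (-κ * (s + 3 * a)) / 3)
        / (2 * κ) := by
  have hF : ∀ t ∈ uIcc a s, HasDerivAt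
      (fun t => (exp (-κ * (s - t)) + exp (-κ * (s + 3 * t)) / 3) / (2 * κ))
      (sineCov κ s t) t := by
    intro t ht
    rw [sineCov_of_le (uIcc_of_le h ▸ ht).2]
    have h1 := (((hasDerivAt_id' t).const_sub s).const_mul (-κ)).exp
    have h2 := ((((hasDerivAt_id' t).const_mul 3).const_add s).const_mul (-κ)).exp
    refine ((h1.add (h2.div_const 3)).div_const (2 * κ)).congr_deriv ?_
    field_simp; ring
  rw [intervalIntegral.integral_eq_sub_of_hasDerivAt hF (continuous_sineCov.intervalIntegrable _ _)]
  simp only [sub_self, mul_zero, exp_zero]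
  ring_nf

lemma integral_sineCov_right (hκ : κ ≠ 0) (h : s ≤ b) :
    ∫ t in s..b, sineCov κ s t =
      (1 - exp (-κ * (4 * s)) - exp (-κ * (b - s)) + exp (-κ * (b + 3 * s))) / (2 * κ) := by
  have hF : ∀ t ∈ uIcc s b, HasDerivAt
      (fun t => (exp (-κ * (t + 3 * s)) - exp (-κ * (t - s))) / (2 * κ)) (sineCov κ s t) t := by
    intro t ht
    rw [sineCov_comm, sineCov_of_le (uIcc_of_le h ▸ ht).1]
    have h1 := (((hasDerivAt_id' t).add_const (3 * s)).const_mul (-κ)).exp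
    have h2 := (((hasDerivAt_id' t).sub_const s).const_mul (-κ)).exp
    refine ((h1.sub h2).div_const (2 * κ)).congr_deriv ?_
    field_simp; ring
  rw [intervalIntegral.integral_eq_sub_of_hasDerivAt hF (continuous_sineCov.intervalIntegrable _ _)]
  simp only [sub_self, mul_zero, exp_zero]
  ring_nf

lemma integral_sineCov (hκ : κ ≠ 0) (ha : a ≤ s) (hb : s ≤ b) :
    ∫ t in a..b, sineCov κ s t =
      (2 - exp (-κ * (s - a)) - exp (-κ * (b - s)) - exp (-κ * (s + 3 * a)) / 3
        - 2 * exp (-κ * (4 * s)) / 3 + exp (-κ * (b + 3 * s))) / (2 * κ) := by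
  rw [← intervalIntegral.integral_add_adjacent_intervals
    (continuous_sineCov.intervalIntegrable a s) (continuous_sineCov.intervalIntegrable s b),
    integral_sineCov_left hκ ha, integral_sineCov_right hκ hb]
  ring

lemma integral_integral_sineCov (hκ : κ ≠ 0) (hab : a ≤ b) :
    ∫ s in a..b, ∫ t in a..b, sineCov κ s t =
      (b - a) / κ + (1 / (2 * κ ^ 2)) *
        (-(1 / 6) * exp (-4 * κ * b) - (1 / 2) * exp (-4 * κ * a)
          + (2 / 3) * exp (-κ * (3 * a + b)) + 2 * exp (-κ * (b - a)) - 2) := by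
  have hF : ∀ s ∈ uIcc a b, HasDerivAt
      (fun s => (2 * s + (exp (-κ * (s - a)) - exp (-κ * (b - s)) + exp (-κ * (s + 3 * a)) / 3
        + exp (-κ * (4 * s)) / 6 - exp (-κ * (b + 3 * s)) / 3) / κ) / (2 * κ))
      ((2 - exp (-κ * (s - a)) - exp (-κ * (b - s)) - exp (-κ * (s + 3 * a)) / 3
        - 2 * exp (-κ * (4 * s)) / 3 + exp (-κ * (b + 3 * s))) / (2 * κ)) s := by
    intro s _
    have h1 := (((hasDerivAt_id' s).sub_const a).const_mul (-κ)).exp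
    have h2 := (((hasDerivAt_id' s).const_sub b).const_mul (-κ)).exp
    have h3 := (((hasDerivAt_id' s).add_const (3 * a)).const_mul (-κ)).exp
    have h4 := (((hasDerivAt_id' s).const_mul 4).const_mul (-κ)).exp
    have h5 := ((((hasDerivAt_id' s).const_mul 3).const_add b).const_mul (-κ)).exp
    have hsum := (((h1.sub h2).add (h3.div_const 3)).add (h4.div_const 6)).sub (h5.div_const 3)
    refine ((((hasDerivAt_id' s).const_mul 2).add (hsum.div_const κ)).div_const
      (2 * κ)).congr_deriv ?_
    field_simp; ring
  rw [intervalIntegral.integral_congr fun s hs =>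
      integral_sineCov hκ (uIcc_of_le hab ▸ hs).1 (uIcc_of_le hab ▸ hs).2,
    intervalIntegral.integral_eq_sub_of_hasDerivAt hF
      (Continuous.intervalIntegrable (by fun_prop) _ _)]
  simp only [sub_self, mul_zero, exp_zero]
  field_simp
  ring_nf

end

/-- the double integral of the Brownian sine covariance over one sampling bin. -/
theorem bin_double_integral
    (κ δ : ℝ) (hκ : 0 < κ) (hδ : 0 < δ) (n : ℕ) :
    (∫ s₁ in (n * δ)..((n + 1) * δ), ∫ s₂ in (n * δ)..((n + 1) * δ),
        (1 / 2) * (Real.exp (-κ * |s₁ - s₂|)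
          - Real.exp (-κ * (s₁ + s₂ + 2 * min s₁ s₂)))) =
      δ / κ + (1 / (2 * κ ^ 2)) *
        (-(1 / 6) * Real.exp (-4 * κ * (n + 1) * δ)
          - (1 / 2) * Real.exp (-4 * κ * n * δ)
          + (2 / 3) * Real.exp (-κ * (4 * n + 1) * δ)
          + 2 * Real.exp (-κ * δ) - 2) := by
  have hbin : (n : ℝ) * δ ≤ (n + 1) * δ := by nlinarith
  have hformula := integral_integral_sineCov hκ.ne' hbin
  simp only [sineCov] at hformula
  rw [hformula]
  ring_nf
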